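/- If l : (0,∞) → (0,∞) is slowly varying, then for every ε > 0, l(x) x^{-ε} → 0 and l(x) x^{ε} → ∞ as x → ∞. -/

import Mathlib

open Filter Topology

/-!
Put `f u = log (l (exp u))`; slow variation says `f (u + t) - f u → 0` for each `t`. Since `f` is
measurable, Karamata's uniform convergence theorem makes this uniform in `t ∈ [0, 1]`: by Egorov,
along sequences `uₙ` and `uₙ + tₙ` the convergence is uniform off sets of small measure, and for
some `s ∈ [1, 2]` both `s` and `s - tₙ` avoid them. Telescoping over unit steps then gives
`f u = o(u)`, i.e. `log (l x) = o(log x)`, so `log (l x * x ^ s) = s log x + o(log x) → ±∞`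
according to the sign of `s`.
-/

open MeasureTheory Set Asymptotics

theorem exists_mem_Icc_diff_sub_mem_Icc_diff {T₁ T₂ : Set ℝ} (hT : volume T₁ + volume T₂ < 1)
    {t : ℝ} (ht : t ∈ Icc 0 1) : ∃ s, s ∈ Icc 0 2 \ T₁ ∧ s - t ∈ Icc 0 2 \ T₂ := by
  have hbad : volume (T₁ ∪ (· - t) ⁻¹' T₂) < volume (Icc (1 : ℝ) 2) := by
    calc volume (T₁ ∪ (· - t) ⁻¹' T₂) ≤ volume T₁ + volume ((· - t) ⁻¹' T₂) :=
          measure_union_le _ _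
      _ = volume T₁ + volume T₂ := by simp_rw [sub_eq_add_neg, measure_preimage_add_right]
      _ < volume (Icc (1 : ℝ) 2) := by norm_num [hT]
  obtain ⟨s, hs, hsT⟩ := not_subset.1 fun h => (measure_mono h).not_gt hbad
  simp only [mem_union, mem_preimage, not_or] at hsT
  exact ⟨s, ⟨⟨by linarith [hs.1], hs.2⟩, hsT.1⟩,
    ⟨⟨by linarith [hs.1, ht.2], by linarith [hs.2, ht.1]⟩, hsT.2⟩⟩

section UniformConvergence

variable {f : ℝ → ℝ} (hf : Measurable f) (h : ∀ t, Tendsto (fun u => f (u + t) - f u) atTop (𝓝 0))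
include hf h

theorem exists_tendstoUniformlyOn_Icc_diff {u : ℕ → ℝ} (hu : Tendsto u atTop atTop) :
    ∃ T, volume T ≤ ENNReal.ofReal (1 / 4) ∧
      TendstoUniformlyOn (fun n s => f (u n + s) - f (u n)) 0 atTop (Icc 0 2 \ T) := by
  obtain ⟨T, -, -, hT, hunif⟩ := tendstoUniformlyOn_of_ae_tendsto (μ := volume)
    (fun n => ((hf.comp (measurable_const_add (u n))).sub measurable_const).stronglyMeasurable)
    stronglyMeasurable_const measurableSet_Icc measure_Icc_lt_top.ne
    (ae_of_all _ fun s _ => (h s).comp hu) (by norm_num : (0 : ℝ) < 1 / 4)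
  exact ⟨T, hT, hunif⟩

theorem tendsto_sub_comp_of_tendsto_atTop {u t : ℕ → ℝ} (hu : Tendsto u atTop atTop)
    (ht : ∀ᶠ n in atTop, t n ∈ Icc 0 1) :
    Tendsto (fun n => f (u n + t n) - f (u n)) atTop (𝓝 0) := by
  have hv : Tendsto (fun n => u n + t n) atTop atTop :=
    tendsto_atTop_mono' _ (ht.mono fun n hn => le_add_of_nonneg_right hn.1) hu
  obtain ⟨T₁, hT₁, hunif₁⟩ := exists_tendstoUniformlyOn_Icc_diff hf h hu
  obtain ⟨T₂, hT₂, hunif₂⟩ := exists_tendstoUniformlyOn_Icc_diff hf h hv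
  have hT : volume T₁ + volume T₂ < 1 := by
    calc volume T₁ + volume T₂ ≤ ENNReal.ofReal (1 / 4) + ENNReal.ofReal (1 / 4) := by gcongr
      _ < 1 := by rw [← ENNReal.ofReal_add] <;> norm_num
  rw [Metric.tendsto_nhds]
  intro ε hε
  filter_upwards [Metric.tendstoUniformlyOn_iff.1 hunif₁ (ε / 2) (half_pos hε),
    Metric.tendstoUniformlyOn_iff.1 hunif₂ (ε / 2) (half_pos hε), ht] with n h₁ h₂ htn
  obtain ⟨s, hs₁, hs₂⟩ := exists_mem_Icc_diff_sub_mem_Icc_diff hT htn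
  -- `f (u + t) - f u = (f (u + s) - f u) - (f ((u + t) + (s - t)) - f (u + t))`
  have e₁ := h₁ s hs₁
  have e₂ := h₂ (s - t n) hs₂
  simp only [Pi.zero_apply, dist_zero_left, Real.norm_eq_abs, add_add_sub_cancel] at e₁ e₂
  rw [Real.dist_eq, sub_zero]
  calc |f (u n + t n) - f (u n)| ≤ |f (u n + t n) - f (u n + s)| + |f (u n + s) - f (u n)| :=
        abs_sub_le _ _ _
    _ < ε / 2 + ε / 2 := add_lt_add (by rwa [abs_sub_comm]) e₁
    _ = ε := add_halves ε

theorem tendstoUniformlyOn_sub_of_measurable :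
    TendstoUniformlyOn (fun u t => f (u + t) - f u) 0 atTop (Icc 0 1) := by
  have hprod : Tendsto (fun p : ℝ × ℝ => f (p.1 + p.2) - f p.1) (atTop ×ˢ 𝓟 (Icc 0 1)) (𝓝 0) := by
    rw [tendsto_iff_seq_tendsto]
    intro p hp
    rw [tendsto_prod_iff', tendsto_principal] at hp
    exact tendsto_sub_comp_of_tendsto_atTop hf h hp.1 hp.2
  rw [Metric.tendstoUniformlyOn_iff]
  intro ε hε
  simpa only [Pi.zero_apply, dist_comm] using
    eventually_prod_principal_iff.1 (Metric.tendsto_nhds.1 hprod ε hε)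

end UniformConvergence

theorem abs_sub_le_mul_of_forall_Icc {f : ℝ → ℝ} {δ U : ℝ}
    (hU : ∀ u ≥ U, ∀ t ∈ Icc 0 1, |f (u + t) - f u| ≤ δ) {x : ℝ} (hx : U ≤ x) :
    |f x - f U| ≤ δ * (x - U + 1) := by
  have hnat : ∀ k : ℕ, |f (U + k) - f U| ≤ δ * k := by
    intro k
    induction k with
    | zero => simp
    | succ k ih =>
      have hstep := hU (U + k) (by simp) 1 (by simp)
      calc |f (U + ↑(k + 1)) - f U| ≤ |f (U + k + 1) - f (U + k)| + |f (U + k) - f U| := by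
            push_cast; rw [← add_assoc]; exact abs_sub_le _ _ _
        _ ≤ δ + δ * k := add_le_add hstep ih
        _ = δ * ↑(k + 1) := by push_cast; ring
  have hδ : 0 ≤ δ := (abs_nonneg _).trans (hU U le_rfl 0 (by simp))
  set k := ⌊x - U⌋₊
  have hk : (k : ℝ) ≤ x - U := Nat.floor_le (sub_nonneg.2 hx)
  have hk' : x - U < k + 1 := Nat.lt_floor_add_one _
  have hlast := hU (U + k) (by simp) (x - (U + k)) ⟨by linarith, by linarith⟩
  rw [add_sub_cancel] at hlast
  calc |f x - f U| ≤ |f x - f (U + k)| + |f (U + k) - f U| := abs_sub_le _ _ _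
    _ ≤ δ + δ * k := add_le_add hlast (hnat k)
    _ ≤ δ * (x - U + 1) := by linarith [mul_le_mul_of_nonneg_left hk hδ]

theorem isLittleO_id_of_tendstoUniformlyOn_sub {f : ℝ → ℝ}
    (h : TendstoUniformlyOn (fun u t => f (u + t) - f u) 0 atTop (Icc 0 1)) : f =o[atTop] id := by
  refine IsLittleO.of_bound fun c hc => ?_
  obtain ⟨U, hU⟩ := eventually_atTop.1 (Metric.tendstoUniformlyOn_iff.1 h (c / 2) (half_pos hc))
  have hbound : ∀ u ≥ U, ∀ t ∈ Icc 0 1, |f (u + t) - f u| ≤ c / 2 := fun u hu t ht => by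
    have := (hU u hu t ht).le
    rwa [Pi.zero_apply, dist_zero_left, Real.norm_eq_abs] at this
  filter_upwards [eventually_ge_atTop U,
    (tendsto_id.const_mul_atTop (half_pos hc)).eventually_ge_atTop (|f U| + c / 2 * (1 - U))]
    with x hxU hx
  have hfx := abs_sub_le_mul_of_forall_Icc hbound hxU
  rw [id] at hx
  rw [Real.norm_eq_abs, Real.norm_eq_abs, id]
  linarith [abs_sub_abs_le_abs_sub (f x) (f U), mul_le_mul_of_nonneg_left (le_abs_self x) hc.le]

section SlowVariation

open Real

variable {l : ℝ → ℝ} (hpos : ∀ x > (0 : ℝ), 0 < l x)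
  (hslow : ∀ c > (0 : ℝ), Tendsto (fun x => l (c * x) / l x) atTop (𝓝 1))
include hpos hslow

theorem tendsto_log_comp_exp_add_sub (t : ℝ) :
    Tendsto (fun u => log (l (exp (u + t))) - log (l (exp u))) atTop (𝓝 0) := by
  have hlim := ((continuousAt_log one_ne_zero).tendsto.comp
    ((hslow (exp t) (exp_pos t)).comp tendsto_exp_atTop))
  rw [log_one] at hlim
  refine hlim.congr fun u => ?_
  simp only [Function.comp_apply, exp_add, mul_comm (exp u)]
  exact log_div (hpos _ (by positivity)).ne' (hpos _ (exp_pos u)).ne'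

theorem isLittleO_log_comp_log (hmeas : Measurable l) :
    (fun x => log (l x)) =o[atTop] log := by
  have ho := isLittleO_id_of_tendstoUniformlyOn_sub <|
    tendstoUniformlyOn_sub_of_measurable (measurable_log.comp (hmeas.comp measurable_exp))
      (tendsto_log_comp_exp_add_sub hpos hslow)
  refine (ho.comp_tendsto tendsto_log_atTop).congr' ?_ EventuallyEq.rfl
  filter_upwards [eventually_gt_atTop 0] with x hx
  simp [exp_log hx]

end SlowVariation

/-- If `l` is slowly varying (and measurable, positive on `(0,∞)`), then for every
`ε > 0`, `l(x) x^{-ε} → 0` and `l(x) x^{ε} → ∞` as `x → ∞`. -/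
theorem slowly_varying_power_limits
    (l : ℝ → ℝ) (hmeas : Measurable l) (hpos : ∀ x > (0 : ℝ), 0 < l x)
    (hslow : ∀ c > (0 : ℝ), Tendsto (fun x => l (c * x) / l x) atTop (nhds 1)) :
    ∀ ε > (0 : ℝ),
      Tendsto (fun x => l x * x ^ (-ε)) atTop (nhds 0) ∧
      Tendsto (fun x => l x * x ^ ε) atTop atTop := by
  intro ε hε
  have ho := isLittleO_log_comp_log hpos hslow hmeas
  have hequiv (s : ℝ) (hs : s ≠ 0) :
      (fun x => s * Real.log x + Real.log (l x)) ~[atTop] fun x => s * Real.log x :=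
    IsEquivalent.refl.add_isLittleO (ho.const_mul_right' hs.isUnit)
  have hexp (s : ℝ) :
      (fun x => Real.exp (s * Real.log x + Real.log (l x))) =ᶠ[atTop] fun x => l x * x ^ s := by
    filter_upwards [eventually_gt_atTop 0] with x hx
    rw [Real.exp_add, Real.exp_log (hpos x hx), Real.rpow_def_of_pos hx, mul_comm, mul_comm s]
  constructor
  · refine (Real.tendsto_exp_atBot.comp ?_).congr' (hexp (-ε))
    exact (hequiv _ (neg_ne_zero.2 hε.ne')).symm.tendsto_atBot
      (Real.tendsto_log_atTop.const_mul_atTop_of_neg (neg_neg_of_pos hε))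
  · refine (Real.tendsto_exp_atTop.comp ?_).congr' (hexp ε)
    exact (hequiv _ hε.ne').symm.tendsto_atTop (Real.tendsto_log_atTop.const_mul_atTop hε)
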